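/- Let D be a matrix and Γ_5 an involution (Γ_5² = I) such that Q = Γ_5 D is Hermitian. Then for the twisted mass operator D_TM(μ) = D + iμΓ_5 with μ real, the singular values of D_TM(μ) are exactly √(λ² + μ²) where λ ranges over the eigenvalues of Q. In particular, the smallest singular value of D_TM(μ) equals √(λ_sm² + μ²) where λ_sm is the eigenvalue of Q of smallest absolute value. -/

import Mathlib

open Matrix

lemma tm_herm_spectrum (n : ℕ) (a : Matrix (Fin n) (Fin n) ℂ) (ha : a.IsHermitian) :
    spectrum ℂ a = Set.range (fun i => (ha.eigenvalues i : ℂ)) := by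
  conv_lhs => rw [ha.spectral_theorem, Unitary.conjStarAlgAut_apply, Unitary.spectrum_star_right_conjugate, spectrum_diagonal]
  ext z; simp [Function.comp]

theorem twisted_mass_singular_values
    (n : ℕ) (hn : 0 < n)
    (D Γ₅ : Matrix (Fin n) (Fin n) ℂ)
    (hΓherm : Γ₅ᴴ = Γ₅) (hΓinv : Γ₅ * Γ₅ = 1)
    (hQherm : (Γ₅ * D)ᴴ = Γ₅ * D)
    (μ : ℝ)
    (DTM : Matrix (Fin n) (Fin n) ℂ)
    (hDTM : DTM = D + (Complex.I * (μ : ℂ)) • Γ₅) :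
    (∀ σ : ℝ, (0 ≤ σ ∧ ((σ ^ 2 : ℝ) : ℂ) ∈ spectrum ℂ (DTMᴴ * DTM)) ↔
        ∃ lam : ℝ, ((lam : ℂ) ∈ spectrum ℂ (Γ₅ * D) ∧
          σ = Real.sqrt (lam ^ 2 + μ ^ 2))) ∧
    ∀ lamsm : ℝ, ((lamsm : ℂ) ∈ spectrum ℂ (Γ₅ * D)) →
      (∀ lam : ℝ, ((lam : ℂ) ∈ spectrum ℂ (Γ₅ * D)) → |lamsm| ≤ |lam|) →
      sInf {σ : ℝ | 0 ≤ σ ∧ ((σ ^ 2 : ℝ) : ℂ) ∈ spectrum ℂ (DTMᴴ * DTM)} =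
        Real.sqrt (lamsm ^ 2 + μ ^ 2) := by
  haveI : Nonempty (Fin n) := Fin.pos_iff_nonempty.mp hn
  -- key algebraic identity
  have hkey : DTMᴴ * DTM = algebraMap ℂ _ ((μ:ℂ)^2) + (Γ₅ * D)^2 := by
    subst hDTM
    have h1 : Dᴴ * Γ₅ = Γ₅ * D := by
      conv_rhs => rw [← hQherm]
      rw [conjTranspose_mul, hΓherm]
    have h2 : Dᴴ = Γ₅ * D * Γ₅ := by rw [← h1, mul_assoc, hΓinv, mul_one]
    simp only [conjTranspose_add, conjTranspose_smul, hΓherm, add_mul, mul_add,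
      smul_mul_assoc, mul_smul_comm, smul_smul, star_mul', Complex.star_def,
      Complex.conj_I, Complex.conj_ofReal]
    rw [h1, h2]
    rw [Algebra.algebraMap_eq_smul_one]
    rw [show Γ₅ * D * Γ₅ * D = (Γ₅ * D)^2 by rw [pow_two, mul_assoc]]
    rw [hΓinv]
    have hI : (Complex.I * (μ:ℂ)) * (-Complex.I * (μ:ℂ)) = (μ:ℂ)^2 := by
      ring_nf
      rw [Complex.I_sq]; ring
    rw [smul_add, smul_smul, hI]
    module
  have hQsq : spectrum ℂ ((Γ₅ * D)^2) = (· ^ 2) '' spectrum ℂ (Γ₅ * D) :=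
    spectrum.map_pow_of_pos (Γ₅ * D) two_pos
  have hiff : ∀ σ : ℝ, (0 ≤ σ ∧ ((σ ^ 2 : ℝ) : ℂ) ∈ spectrum ℂ (DTMᴴ * DTM)) ↔
      ∃ lam : ℝ, ((lam : ℂ) ∈ spectrum ℂ (Γ₅ * D) ∧
        σ = Real.sqrt (lam ^ 2 + μ ^ 2)) := by
    intro σ
    constructor
    · rintro ⟨hσ, hmem⟩
      rw [hkey, show ((σ^2:ℝ):ℂ) = (((σ:ℂ)^2 - (μ:ℂ)^2) + (μ:ℂ)^2) by push_cast; ring,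
        spectrum.add_mem_add_iff, hQsq] at hmem
      obtain ⟨z, hzmem, hz2⟩ := hmem
      have hQ : (Γ₅ * D).IsHermitian := hQherm
      obtain ⟨i, hi⟩ := (tm_herm_spectrum n (Γ₅ * D) hQ ▸ hzmem : z ∈ Set.range _)
      refine ⟨hQ.eigenvalues i, by rw [tm_herm_spectrum n (Γ₅ * D) hQ]; exact ⟨i, rfl⟩, ?_⟩
      set lam : ℝ := hQ.eigenvalues i with hlam
      have hz : ((lam : ℝ) : ℂ)^2 = (σ:ℂ)^2 - (μ:ℂ)^2 := by
        rw [show ((lam : ℝ) : ℂ) = z from hi]; exact hz2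
      have hr : lam^2 = σ^2 - μ^2 := by exact_mod_cast hz
      have : σ^2 = lam^2 + μ^2 := by linarith
      rw [← this, Real.sqrt_sq hσ]
    · rintro ⟨lam, hmem, rfl⟩
      refine ⟨Real.sqrt_nonneg _, ?_⟩
      have hsq : (Real.sqrt (lam^2 + μ^2))^2 = lam^2 + μ^2 := Real.sq_sqrt (by positivity)
      rw [hkey, show ((Real.sqrt (lam^2+μ^2)^2 : ℝ) : ℂ) = ((lam:ℂ)^2 + (μ:ℂ)^2) by
        rw [hsq]; push_cast; ring, spectrum.add_mem_add_iff, hQsq]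
      exact ⟨(lam : ℂ), hmem, rfl⟩
  refine ⟨hiff, ?_⟩
  intro lamsm hsm hmin
  have hmemS : Real.sqrt (lamsm^2 + μ^2) ∈
      {σ : ℝ | 0 ≤ σ ∧ ((σ ^ 2 : ℝ) : ℂ) ∈ spectrum ℂ (DTMᴴ * DTM)} :=
    (hiff _).mpr ⟨lamsm, hsm, rfl⟩
  refine le_antisymm (csInf_le ⟨0, fun x hx => hx.1⟩ hmemS) (le_csInf ⟨_, hmemS⟩ ?_)
  rintro σ hσ
  obtain ⟨lam, hlmem, rfl⟩ := (hiff σ).mp hσ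
  apply Real.sqrt_le_sqrt
  have : lamsm^2 ≤ lam^2 := by
    rw [← sq_abs lamsm, ← sq_abs lam]
    exact pow_le_pow_left₀ (abs_nonneg _) (hmin lam hlmem) 2
  linarith
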